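/- arXiv:1704.07665 — 6 statements merged into one kernel-verified Lean document; each statement's English description precedes it below -/
import Mathlib

section
/- Let K ⊆ ℝ^n be a proper cone. If x ∈ 𝕊 is such that x ∉ K* and −x ∉ K*, then there exists y ∈ K ∩ 𝕊 with ⟨x,y⟩ = 0. -/
open Matrix RealInnerProductSpace

/-- `K ⊆ ℝⁿ` is a proper cone: a closed convex cone which is pointed and has
nonempty interior. -/
def IsProperCone {n : ℕ} (K : Set (EuclideanSpace ℝ (Fin n))) : Prop :=
  IsClosed K ∧ Convex ℝ K ∧ (∀ (t : ℝ), 0 ≤ t → ∀ x ∈ K, t • x ∈ K) ∧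
    K ∩ (-K) = {0} ∧ (interior K).Nonempty

/-- The dual cone `K* = {x : ⟨x,y⟩ ≥ 0 for all y ∈ K}`. -/
def dualCone {n : ℕ} (K : Set (EuclideanSpace ℝ (Fin n))) :
    Set (EuclideanSpace ℝ (Fin n)) :=
  {x | ∀ y ∈ K, 0 ≤ ⟪x, y⟫}

/-- Condition (M): `⟨Ax,x⟩ ≥ ⟨Ay,y⟩` for all `x ∈ 𝕊` and `y ∈ K ∩ 𝕊` with `x ⊥ y`. -/
def CondM {n : ℕ} (A : Matrix (Fin n) (Fin n) ℝ) (K : Set (EuclideanSpace ℝ (Fin n))) : Prop :=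
  ∀ x y : EuclideanSpace ℝ (Fin n), ‖x‖ = 1 → y ∈ K → ‖y‖ = 1 → ⟪x, y⟫ = 0 →
    ⟪Matrix.toEuclideanLin A y, y⟫ ≤ ⟪Matrix.toEuclideanLin A x, x⟫

/-- If `K ⊆ ℝⁿ` is a proper cone and `x ∈ 𝕊` satisfies `x ∉ K*` and `-x ∉ K*`,
then there exists `y ∈ K ∩ 𝕊` with `⟨x,y⟩ = 0`. -/
theorem quadratic_spherical_stmt1 (n : ℕ) (hn : 1 ≤ n)
    (K : Set (EuclideanSpace ℝ (Fin n))) (hK : IsProperCone K)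
    (x : EuclideanSpace ℝ (Fin n)) (hx : ‖x‖ = 1)
    (hx1 : x ∉ dualCone K) (hx2 : -x ∉ dualCone K) :
    ∃ y : EuclideanSpace ℝ (Fin n), y ∈ K ∧ ‖y‖ = 1 ∧ ⟪x, y⟫ = 0 := by

  obtain ⟨hcl, hconv, hscale, hpoint, hint⟩ := hK
  -- sums of cone elements stay in the cone
  have hadd : ∀ u ∈ K, ∀ v ∈ K, u + v ∈ K := by
    intro u hu v hv
    have hmid : (1/2 : ℝ) • u + (1/2 : ℝ) • v ∈ K := by
      have := hconv hu hv (by norm_num : (0:ℝ) ≤ 1/2) (by norm_num : (0:ℝ) ≤ 1/2) (by norm_num)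
      simpa using this
    have := hscale 2 (by norm_num) _ hmid
    simpa [smul_add, smul_smul] using this
  simp only [dualCone, Set.mem_setOf_eq, not_forall] at hx1 hx2
  obtain ⟨y₁, hy₁K, hy₁⟩ := hx1
  obtain ⟨y₂, hy₂K, hy₂⟩ := hx2
  push_neg at hy₁ hy₂
  rw [inner_neg_left, neg_neg_iff_pos] at hy₂
  set a := ⟪x, y₁⟫ with ha
  set b := ⟪x, y₂⟫ with hb
  set z : EuclideanSpace ℝ (Fin n) := b • y₁ + (-a) • y₂ with hz
  have hzK : z ∈ K := hadd _ (hscale b hy₂.le _ hy₁K) _ (hscale (-a) (by linarith) _ hy₂K)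
  have hxz : ⟪x, z⟫ = 0 := by
    simp [hz, inner_add_right, inner_smul_right, ← ha, ← hb]; ring
  have hzne : z ≠ 0 := by
    intro h0
    have h1 : b • y₁ ∈ K ∩ (-K) := by
      constructor
      · exact hscale b hy₂.le _ hy₁K
      · rw [Set.mem_neg]
        have heq : -(b • y₁) = (-a) • y₂ := by
          have h0' : b • y₁ + (-a) • y₂ = 0 := by rw [hz] at h0; exact h0
          exact add_eq_zero_iff_neg_eq.mp h0'
        rw [heq]
        exact hscale (-a) (by linarith) _ hy₂K
    rw [hpoint] at h1
    have hb0 : b • y₁ = 0 := h1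
    have : y₁ = 0 := by
      rcases smul_eq_zero.mp hb0 with h | h
      · exact absurd h (by positivity)
      · exact h
    rw [ha, this] at hy₁
    simp at hy₁
  refine ⟨‖z‖⁻¹ • z, hscale _ (by positivity) _ hzK, ?_, ?_⟩
  · rw [norm_smul]
    simp [norm_ne_zero_iff.mpr hzne]
  · rw [inner_smul_right, hxz, mul_zero]
end

section
/- Let K ⊆ ℝ^n be a superdual proper cone and let A ∈ ℝ^{n×n} be symmetric. If A satisfies condition (M) for K, then A has the K-Z-property, i.e., ⟨Ax,y⟩ ≤ 0 for all x ∈ K and y ∈ K* with ⟨x,y⟩ = 0. -/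
/-!
For orthogonal `x, y ∈ K` rescale them to `u, v` of equal norm. Then `u + v ∈ K` and `v - u` are
orthogonal of equal norm, so (M), which is invariant under a common rescaling of both vectors,
gives `⟨A(u+v), u+v⟩ ≤ ⟨A(v-u), v-u⟩`. For symmetric `A` the difference of the two sides is
`4⟨Au, v⟩`, a positive multiple of `⟨Ax, y⟩`.
-/

open Matrix RealInnerProductSpace

section InnerProductSpace

variable {E : Type*} [NormedAddCommGroup E] [InnerProductSpace ℝ E]

theorem inner_map_smul_smul_self (T : E →ₗ[ℝ] E) (c : ℝ) (x : E) :
    ⟪T (c • x), c • x⟫ = c ^ 2 * ⟪T x, x⟫ := by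
  rw [map_smul, real_inner_smul_left, real_inner_smul_right]
  ring

theorem LinearMap.IsSymmetric.inner_map_add_self_sub_inner_map_sub_self {T : E →ₗ[ℝ] E}
    (hT : T.IsSymmetric) (u v : E) :
    ⟪T (u + v), u + v⟫ - ⟪T (v - u), v - u⟫ = 4 * ⟪T u, v⟫ := by
  have hvu : ⟪T v, u⟫ = ⟪T u, v⟫ := by rw [hT, real_inner_comm]
  simp only [map_add, map_sub, inner_add_left, inner_add_right, inner_sub_left, inner_sub_right,
    hvu]
  ring

end InnerProductSpace

namespace IsProperCone

variable {n : ℕ} {K : Set (EuclideanSpace ℝ (Fin n))}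

theorem smul_mem (hK : IsProperCone K) {t : ℝ} (ht : 0 ≤ t) {x : EuclideanSpace ℝ (Fin n)}
    (hx : x ∈ K) : t • x ∈ K :=
  hK.2.2.1 t ht x hx

theorem add_mem (hK : IsProperCone K) {x y : EuclideanSpace ℝ (Fin n)} (hx : x ∈ K)
    (hy : y ∈ K) : x + y ∈ K := by
  have hmid : (1 / 2 : ℝ) • x + (1 / 2 : ℝ) • y ∈ K :=
    hK.2.1 hx hy (by norm_num) (by norm_num) (by norm_num)
  have h2 : (2 : ℝ) • ((1 / 2 : ℝ) • x + (1 / 2 : ℝ) • y) = x + y := by module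
  simpa only [h2] using hK.smul_mem zero_le_two hmid

end IsProperCone

namespace CondM

variable {n : ℕ} {A : Matrix (Fin n) (Fin n) ℝ} {K : Set (EuclideanSpace ℝ (Fin n))}

theorem le_of_norm_eq (hM : CondM A K) (hK : IsProperCone K) {x y : EuclideanSpace ℝ (Fin n)}
    (hxy : ‖x‖ = ‖y‖) (hy : y ∈ K) (horth : ⟪x, y⟫ = 0) :
    ⟪toEuclideanLin A y, y⟫ ≤ ⟪toEuclideanLin A x, x⟫ := by
  rcases eq_or_ne y 0 with rfl | hy0
  · rw [norm_zero, norm_eq_zero] at hxy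
    simp [hxy]
  have hr : 0 < ‖y‖ := norm_pos_iff.mpr hy0
  have hunit : ∀ z : EuclideanSpace ℝ (Fin n), ‖z‖ = ‖y‖ → ‖‖y‖⁻¹ • z‖ = 1 := fun z hz => by
    rw [norm_smul, norm_inv, norm_norm, hz, inv_mul_cancel₀ hr.ne']
  have h := hM (‖y‖⁻¹ • x) (‖y‖⁻¹ • y) (hunit x hxy) (hK.smul_mem (by positivity) hy)
    (hunit y rfl) (by rw [real_inner_smul_left, real_inner_smul_right, horth, mul_zero, mul_zero])
  rw [inner_map_smul_smul_self, inner_map_smul_smul_self] at h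
  exact le_of_mul_le_mul_left h (by positivity)

theorem inner_map_nonpos_of_orthogonal (hM : CondM A K) (hK : IsProperCone K) (hA : A.IsSymm)
    {x y : EuclideanSpace ℝ (Fin n)} (hx : x ∈ K) (hy : y ∈ K) (horth : ⟪x, y⟫ = 0) :
    ⟪toEuclideanLin A x, y⟫ ≤ 0 := by
  have hT : (toEuclideanLin A).IsSymmetric :=
    isSymmetric_toEuclideanLin_iff.mpr (isHermitian_iff_isSymm.mpr hA)
  set u := ‖y‖ • x
  set v := ‖x‖ • y
  have huv : ⟪u, v⟫ = 0 := by
    rw [real_inner_smul_left, real_inner_smul_right, horth, mul_zero, mul_zero]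
  have hnorm : ‖u‖ = ‖v‖ := by
    simp only [u, v, norm_smul, norm_norm, mul_comm]
  have hnorm_sum_diff : ‖u + v‖ = ‖v - u‖ := by
    rw [← sq_eq_sq₀ (norm_nonneg _) (norm_nonneg _), norm_add_sq_real, norm_sub_sq_real,
      real_inner_comm u v, huv]
    ring
  have horth_sum_diff : ⟪v - u, u + v⟫ = 0 := by
    rw [inner_sub_left, inner_add_right, inner_add_right, real_inner_comm u v, huv,
      real_inner_self_eq_norm_sq, real_inner_self_eq_norm_sq, hnorm]
    ring
  have hsum_mem : u + v ∈ K :=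
    hK.add_mem (hK.smul_mem (norm_nonneg _) hx) (hK.smul_mem (norm_nonneg _) hy)
  have hle := hM.le_of_norm_eq hK hnorm_sum_diff.symm hsum_mem horth_sum_diff
  have hquad : ‖x‖ * ‖y‖ * ⟪toEuclideanLin A x, y⟫ ≤ 0 := by
    have h4 := hT.inner_map_add_self_sub_inner_map_sub_self u v
    rw [map_smul, real_inner_smul_left, real_inner_smul_right] at h4
    linarith
  rcases eq_or_ne x 0 with rfl | hx0
  · simp
  rcases eq_or_ne y 0 with rfl | hy0
  · simp
  exact nonpos_of_mul_nonpos_right hquad (by positivity)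

end CondM

theorem quadratic_spherical_stmt4_general (n : ℕ)
    (K : Set (EuclideanSpace ℝ (Fin n))) (hK : IsProperCone K)
    (hsuper : dualCone K ⊆ K)
    (A : Matrix (Fin n) (Fin n) ℝ) (hA : A.IsSymm) (hM : CondM A K) :
    ∀ x y : EuclideanSpace ℝ (Fin n), x ∈ K → y ∈ dualCone K → ⟪x, y⟫ = 0 →
      ⟪Matrix.toEuclideanLin A x, y⟫ ≤ 0 :=
  fun _ _ hx hy horth => hM.inner_map_nonpos_of_orthogonal hK hA hx (hsuper hy) horth

/-- For a superdual proper cone `K` and symmetric `A` satisfying condition (M),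
the matrix `A` has the K-Z-property: `⟨Ax,y⟩ ≤ 0` whenever `x ∈ K`, `y ∈ K*`, `x ⊥ y`. -/
theorem quadratic_spherical_stmt4 (n : ℕ) (hn : 1 ≤ n)
    (K : Set (EuclideanSpace ℝ (Fin n))) (hK : IsProperCone K)
    (hsuper : dualCone K ⊆ K)
    (A : Matrix (Fin n) (Fin n) ℝ) (hA : A.IsSymm) (hM : CondM A K) :
    ∀ x y : EuclideanSpace ℝ (Fin n), x ∈ K → y ∈ dualCone K → ⟪x, y⟫ = 0 →
      ⟪Matrix.toEuclideanLin A x, y⟫ ≤ 0 :=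
  quadratic_spherical_stmt4_general n K hK hsuper A hA hM
end

section
/- Let K ⊆ ℝ^n be a superdual proper cone and let A ∈ ℝ^{n×n} be symmetric and satisfy condition (M) for K. If x ∈ int(K) ∩ 𝕊 and y ∈ K ∩ 𝕊 are such that ⟨x,y⟩ = 0, then ⟨Ax,y⟩ = 0. -/
open Matrix RealInnerProductSpace

/-- For a superdual proper cone `K` and symmetric `A` satisfying condition (M):
if `x ∈ int(K) ∩ 𝕊`, `y ∈ K ∩ 𝕊` and `⟨x,y⟩ = 0`, then `⟨Ax,y⟩ = 0`. -/
theorem quadratic_spherical_stmt6 (n : ℕ) (hn : 1 ≤ n)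
    (K : Set (EuclideanSpace ℝ (Fin n))) (hK : IsProperCone K)
    (hsuper : dualCone K ⊆ K)
    (A : Matrix (Fin n) (Fin n) ℝ) (hA : A.IsSymm) (hM : CondM A K)
    (x y : EuclideanSpace ℝ (Fin n))
    (hxK : x ∈ interior K) (hx : ‖x‖ = 1)
    (hyK : y ∈ K) (hy : ‖y‖ = 1) (hxy : ⟪x, y⟫ = 0) :
    ⟪Matrix.toEuclideanLin A x, y⟫ = 0 := by
  have hcone := hK.2.2.1
  clear hsuper
  set L := Matrix.toEuclideanLin A with hL
  have hH : A.IsHermitian := by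
    rwa [Matrix.IsHermitian, Matrix.conjTranspose_eq_transpose_of_trivial]
  have hsym : L.IsSymmetric := Matrix.isHermitian_iff_isSymmetric.mp hH
  -- rescaled condition M
  have hM' : ∀ u v : EuclideanSpace ℝ (Fin n), u ∈ K → u ≠ 0 → ‖u‖ = ‖v‖ →
      ⟪v, u⟫ = 0 → ⟪L u, u⟫ ≤ ⟪L v, v⟫ := by
    intro u v huK hu0 huv hperp
    have hr : (0:ℝ) < ‖u‖ := norm_pos_iff.mpr hu0
    have h1 : ‖(‖u‖⁻¹ : ℝ) • v‖ = 1 := by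
      rw [norm_smul, ← huv]; simp [abs_of_pos hr, inv_mul_cancel₀ hr.ne']
    have h2 : ‖(‖u‖⁻¹ : ℝ) • u‖ = 1 := by
      rw [norm_smul]; simp [abs_of_pos hr, inv_mul_cancel₀ hr.ne']
    have h3 : ((‖u‖⁻¹ : ℝ) • u) ∈ K := hcone _ (by positivity) u huK
    have h4 : ⟪(‖u‖⁻¹ : ℝ) • v, (‖u‖⁻¹ : ℝ) • u⟫ = 0 := by
      rw [real_inner_smul_left, real_inner_smul_right, hperp]; ring
    have := hM _ _ h1 h3 h2 h4
    rw [_root_.map_smul, real_inner_smul_left, real_inner_smul_right,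
      _root_.map_smul, real_inner_smul_left, real_inner_smul_right] at this
    have h5 : (0:ℝ) < ‖u‖⁻¹ * ‖u‖⁻¹ := by positivity
    calc ⟪L u, u⟫ = (‖u‖⁻¹ * ‖u‖⁻¹)⁻¹ * (‖u‖⁻¹ * (‖u‖⁻¹ * ⟪L u, u⟫)) := by
          field_simp
      _ ≤ (‖u‖⁻¹ * ‖u‖⁻¹)⁻¹ * (‖u‖⁻¹ * (‖u‖⁻¹ * ⟪L v, v⟫)) := by
          apply mul_le_mul_of_nonneg_left _ (le_of_lt (by positivity))
          linarith
      _ = ⟪L v, v⟫ := by field_simp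
  have hxK' : x ∈ K := interior_subset hxK
  set a : ℝ := ⟪L x, x⟫ with ha
  set b : ℝ := ⟪L y, y⟫ with hb
  set c : ℝ := ⟪L x, y⟫ with hc
  have hc' : ⟪L y, x⟫ = c := by
    rw [hc, hsym x y, real_inner_comm]
  have hyx : ⟪y, x⟫ = 0 := by rw [real_inner_comm]; exact hxy
  have hab1 : b ≤ a := hM _ _ hx hyK hy hxy
  have hab2 : a ≤ b := hM _ _ hy hxK' hx hyx
  have hab : a = b := le_antisymm hab2 hab1
  -- interior ball
  obtain ⟨ε, hε, hball⟩ := Metric.mem_nhds_iff.mp (mem_interior_iff_mem_nhds.mp hxK)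
  have key : ∀ s : ℝ, |s| < ε → c * s ≤ 0 := by
    intro s hs
    set u : EuclideanSpace ℝ (Fin n) := x + s • y with hu
    set v : EuclideanSpace ℝ (Fin n) := y - s • x with hv
    have hxx : ⟪x, x⟫ = (1:ℝ) := by
      rw [real_inner_self_eq_norm_sq, hx]; norm_num
    have hyy : ⟪y, y⟫ = (1:ℝ) := by
      rw [real_inner_self_eq_norm_sq, hy]; norm_num
    have huK : u ∈ K := by
      apply hball
      simp only [hu, Metric.mem_ball, dist_eq_norm, add_sub_cancel_left, norm_smul]
      calc ‖s‖ * ‖y‖ = |s| := by rw [hy, Real.norm_eq_abs]; ring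
        _ < ε := hs
    have hun : ‖u‖^2 = 1 + s^2 := by
      rw [← real_inner_self_eq_norm_sq, hu]
      simp only [inner_add_add_self, real_inner_smul_left, real_inner_smul_right, hxx, hyy, hxy, hyx]
      ring
    have hvn : ‖v‖^2 = 1 + s^2 := by
      rw [← real_inner_self_eq_norm_sq, hv, sub_eq_add_neg]
      simp only [inner_add_add_self, inner_neg_neg, inner_neg_left, inner_neg_right,
        real_inner_smul_left, real_inner_smul_right, hxx, hyy, hxy, hyx]
      ring
    have hu0 : u ≠ 0 := by
      intro h
      rw [h, norm_zero] at hun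
      nlinarith [sq_nonneg s]
    have huvn : ‖u‖ = ‖v‖ := by
      have h1 := norm_nonneg u
      have h2 := norm_nonneg v
      nlinarith [hun, hvn]
    have hperp : ⟪v, u⟫ = 0 := by
      rw [hv, hu]
      simp only [inner_sub_left, inner_add_right, real_inner_smul_left, real_inner_smul_right,
        hxx, hyy, hxy, hyx]
      ring
    have := hM' u v huK hu0 huvn hperp
    have hLu : ⟪L u, u⟫ = a + 2 * c * s + b * s^2 := by
      rw [hu]
      simp only [map_add, _root_.map_smul, inner_add_left, inner_add_right,
        real_inner_smul_left, real_inner_smul_right, ← ha, ← hb, ← hc, hc']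
      ring
    have hLv : ⟪L v, v⟫ = b - 2 * c * s + a * s^2 := by
      rw [hv]
      simp only [map_sub, _root_.map_smul, inner_sub_left, inner_sub_right,
        real_inner_smul_left, real_inner_smul_right, ← ha, ← hb, ← hc, hc']
      ring
    rw [hLu, hLv, hab] at this
    linarith
  have h1 := key (ε/2) (by rw [abs_of_pos (by linarith)]; linarith)
  have h2 := key (-(ε/2)) (by rw [abs_neg, abs_of_pos (by linarith)]; linarith)
  nlinarith
end

section
/- Let K ⊆ ℝ^n be a superdual proper cone and let A ∈ ℝ^{n×n} be symmetric and satisfy condition (M) for K. If x ∈ (−int(K)) ∩ 𝕊 and y ∈ K ∩ 𝕊 are such that ⟨x,y⟩ = 0, then ⟨Ax,y⟩ = 0. -/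
open Matrix RealInnerProductSpace

/-- For a superdual proper cone `K` and symmetric `A` satisfying condition (M):
if `x ∈ (−int(K)) ∩ 𝕊`, `y ∈ K ∩ 𝕊` and `⟨x,y⟩ = 0`, then `⟨Ax,y⟩ = 0`. -/
theorem quadratic_spherical_stmt7 (n : ℕ) (hn : 1 ≤ n)
    (K : Set (EuclideanSpace ℝ (Fin n))) (hK : IsProperCone K)
    (hsuper : dualCone K ⊆ K)
    (A : Matrix (Fin n) (Fin n) ℝ) (hA : A.IsSymm) (hM : CondM A K)
    (x y : EuclideanSpace ℝ (Fin n))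
    (hxK : x ∈ -(interior K)) (hx : ‖x‖ = 1)
    (hyK : y ∈ K) (hy : ‖y‖ = 1) (hxy : ⟪x, y⟫ = 0) :
    ⟪Matrix.toEuclideanLin A x, y⟫ = 0 := by
  have hK' : IsClosed K ∧ Convex ℝ K ∧ (∀ (t : ℝ), 0 ≤ t → ∀ x ∈ K, t • x ∈ K) ∧
      K ∩ (-K) = {0} ∧ (interior K).Nonempty := hK
  have hM' : ∀ x y : EuclideanSpace ℝ (Fin n), ‖x‖ = 1 → y ∈ K → ‖y‖ = 1 → ⟪x, y⟫ = 0 →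
      ⟪Matrix.toEuclideanLin A y, y⟫ ≤ ⟪Matrix.toEuclideanLin A x, x⟫ := hM
  clear hM hK
  set B := Matrix.toEuclideanLin A with hB
  have hsym : ∀ a b : EuclideanSpace ℝ (Fin n), ⟪B a, b⟫ = ⟪a, B b⟫ := by
    have : A.IsHermitian := by
      rw [Matrix.IsHermitian, Matrix.conjTranspose_eq_transpose_of_trivial]; exact hA
    exact fun a b => (Matrix.isHermitian_iff_isSymmetric.1 this) a b
  have hxint : -x ∈ interior K := by simpa [Set.mem_neg] using hxK
  have hxintK : -x ∈ K := interior_subset hxint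
  have hyx : ⟪y, x⟫ = 0 := by rwa [real_inner_comm]
  have hnx : ‖(-x : EuclideanSpace ℝ (Fin n))‖ = 1 := by simpa using hx
  -- f x = f y
  have h1 : ⟪B y, y⟫ ≤ ⟪B x, x⟫ := hM' x y hx hyK hy hxy
  have h2 : ⟪B (-x), -x⟫ ≤ ⟪B y, y⟫ := hM' y (-x) hy hxintK hnx (by simp [hyx])
  have hfeq : ⟪B x, x⟫ = ⟪B y, y⟫ := by
    have : ⟪B (-x), -x⟫ = ⟪B x, x⟫ := by simp
    linarith [h1, h2, this.symm.le]
  -- ball around -x inside K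
  obtain ⟨ε, hε, hball⟩ := Metric.isOpen_iff.1 isOpen_interior (-x) hxint
  set c : ℝ := ⟪B x, y⟫ with hc
  have hcyx : ⟪B y, x⟫ = c := by rw [hsym, real_inner_comm]
  clear_value B c
  have key : ∀ t : ℝ, (-x + t • y) ∈ K → 0 ≤ t * c := by
    intro t hv
    set s : ℝ := Real.sqrt (1 + t ^ 2) with hs
    have hs2 : s ^ 2 = 1 + t ^ 2 := Real.sq_sqrt (by positivity)
    have hspos : 0 < s := Real.sqrt_pos.2 (by positivity)
    set w1 : EuclideanSpace ℝ (Fin n) := y + t • x with hw1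
    set w2 : EuclideanSpace ℝ (Fin n) := -x + t • y with hw2
    have hnorm : ∀ a b : EuclideanSpace ℝ (Fin n), ‖a‖ = 1 → ‖b‖ = 1 → ⟪a, b⟫ = 0 →
        ‖a + t • b‖ = s := by
      intro a b ha hb hab
      have h2' : ‖a + t • b‖ ^ 2 = 1 + t ^ 2 := by
        rw [norm_add_sq_real, real_inner_smul_right, hab, norm_smul, ha, hb]
        simp [mul_pow, sq_abs]
      rw [← Real.sqrt_sq (norm_nonneg (a + t • b)), h2', hs]
    have hnw1 : ‖w1‖ = s := hnorm y x hy hx hyx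
    have hnw2 : ‖w2‖ = s := by
      have := hnorm (-x) y hnx hy (by rw [inner_neg_left, hxy, neg_zero])
      simpa [hw2] using this
    set u : EuclideanSpace ℝ (Fin n) := s⁻¹ • w1 with hu
    set v : EuclideanSpace ℝ (Fin n) := s⁻¹ • w2 with hvv
    have hnu : ‖u‖ = 1 := by
      rw [hu, norm_smul, hnw1, norm_inv, Real.norm_eq_abs, abs_of_pos hspos,
        inv_mul_cancel₀ hspos.ne']
    have hnv : ‖v‖ = 1 := by
      rw [hvv, norm_smul, hnw2, norm_inv, Real.norm_eq_abs, abs_of_pos hspos,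
        inv_mul_cancel₀ hspos.ne']
    have hvK : v ∈ K := hK'.2.2.1 s⁻¹ (by positivity) w2 hv
    have hxx : ⟪x, x⟫ = (1:ℝ) := by
      rw [real_inner_self_eq_norm_mul_norm, hx]; ring
    have hyy : ⟪y, y⟫ = (1:ℝ) := by
      rw [real_inner_self_eq_norm_mul_norm, hy]; ring
    have hw12 : ⟪w1, w2⟫ = 0 := by
      simp only [hw1, hw2, inner_add_left, inner_add_right, real_inner_smul_left,
        real_inner_smul_right, inner_neg_right, hxy, hyx, hxx, hyy]
      ring
    have huv : ⟪u, v⟫ = 0 := by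
      rw [hu, hvv, real_inner_smul_left, real_inner_smul_right, hw12]; ring
    have hMuv := hM' u v hnu hvK hnv huv
    have hexp : ∀ w : EuclideanSpace ℝ (Fin n), ⟪B (s⁻¹ • w), s⁻¹ • w⟫ = s⁻¹ * s⁻¹ * ⟪B w, w⟫ := by
      intro w
      rw [LinearMap.map_smul, real_inner_smul_left, real_inner_smul_right]; ring
    rw [hu, hvv, hexp, hexp] at hMuv
    have hMw : ⟪B w2, w2⟫ ≤ ⟪B w1, w1⟫ := by
      have hpos : 0 < s⁻¹ * s⁻¹ := by positivity
      exact le_of_mul_le_mul_left (by linarith [hMuv]) hpos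
    have e1 : ⟪B w1, w1⟫ = ⟪B y, y⟫ + 2 * t * c + t ^ 2 * ⟪B x, x⟫ := by
      simp only [hw1, map_add, LinearMap.map_smul, inner_add_left, inner_add_right,
        real_inner_smul_left, real_inner_smul_right, hcyx, ← hc]
      ring
    have e2 : ⟪B w2, w2⟫ = ⟪B x, x⟫ - 2 * t * c + t ^ 2 * ⟪B y, y⟫ := by
      simp only [hw2, map_add, map_neg, LinearMap.map_smul, inner_add_left, inner_add_right,
        inner_neg_left, inner_neg_right, real_inner_smul_left, real_inner_smul_right,
        hcyx, ← hc]
      ring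
    rw [e1, e2, hfeq] at hMw
    nlinarith [hMw]
  have ht : (0:ℝ) < ε / 2 := by linarith
  have hmem : ∀ t : ℝ, |t| < ε → -x + t • y ∈ K := by
    intro t htl
    apply interior_subset
    apply hball
    rw [Metric.mem_ball, dist_eq_norm]
    have hd : (-x + t • y) - (-x) = t • y := by abel
    rw [hd, norm_smul, hy, Real.norm_eq_abs, mul_one]
    exact htl
  have k1 := key (ε / 2) (hmem (ε / 2) (by rw [abs_of_pos ht]; linarith))
  have k2 := key (-(ε / 2)) (hmem (-(ε / 2)) (by rw [abs_neg, abs_of_pos ht]; linarith))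
  have h01 : 0 ≤ c := (mul_nonneg_iff_of_pos_left ht).1 k1
  have h02 : 0 ≤ -c := by
    have : (0:ℝ) ≤ ε / 2 * -c := by linarith [k2]
    exact (mul_nonneg_iff_of_pos_left ht).1 this
  linarith
end

section
/- Let K ⊆ ℝ^n be a superdual proper cone and let A ∈ ℝ^{n×n} be symmetric. If A is K-copositive (⟨Ax,x⟩ ≥ 0 for all x ∈ K) and A satisfies condition (M) for K, then A is positive semidefinite, i.e., ⟨Ax,x⟩ ≥ 0 for all x ∈ ℝ^n. -/
open Matrix RealInnerProductSpace

/-- For a superdual proper cone `K` and symmetric `A`: if `A` is K-copositive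
and satisfies condition (M), then `A` is positive semidefinite. -/
theorem quadratic_spherical_stmt9 (n : ℕ) (hn : 1 ≤ n)
    (K : Set (EuclideanSpace ℝ (Fin n))) (hK : IsProperCone K)
    (hsuper : dualCone K ⊆ K)
    (A : Matrix (Fin n) (Fin n) ℝ) (hA : A.IsSymm)
    (hcopos : ∀ x ∈ K, 0 ≤ ⟪Matrix.toEuclideanLin A x, x⟫)
    (hM : CondM A K) :
    ∀ x : EuclideanSpace ℝ (Fin n), 0 ≤ ⟪Matrix.toEuclideanLin A x, x⟫ := by
  obtain ⟨hclosed, hconv, hcone, hpointed, hint⟩ := hK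
  set L := Matrix.toEuclideanLin A with hL
  have hHerm : A.IsHermitian := by
    rw [Matrix.IsHermitian]
    rw [Matrix.IsSymm] at hA
    simpa using hA
  have hSym : ∀ u v : EuclideanSpace ℝ (Fin n), ⟪L u, v⟫ = ⟪u, L v⟫ :=
    (Matrix.isHermitian_iff_isSymmetric.mp hHerm)
  -- K nonempty
  obtain ⟨x₀, hx₀⟩ := hint
  have hx₀K : x₀ ∈ K := interior_subset hx₀
  have h0K : (0 : EuclideanSpace ℝ (Fin n)) ∈ K := by
    simpa using hcone 0 le_rfl x₀ hx₀K
  have haddK : ∀ a ∈ K, ∀ b ∈ K, a + b ∈ K := by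
    intro a ha b hb
    have := hcone 2 (by norm_num) _ (hconv ha hb (by norm_num) (by norm_num) (by norm_num)
      : (1/2 : ℝ) • a + (1/2 : ℝ) • b ∈ K)
    rw [smul_add, smul_smul, smul_smul] at this
    norm_num at this
    exact this
  intro x
  -- projection of x onto K
  have hcomplete : IsComplete K := hclosed.isComplete
  obtain ⟨y, hyK, hy⟩ := exists_norm_eq_iInf_of_complete_convex ⟨0, h0K⟩ hcomplete hconv x
  rw [norm_eq_iInf_iff_real_inner_le_zero hconv hyK] at hy
  set z := x - y with hz
  have hxyz : x = y + z := by simp [hz]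
  have hzK : ∀ k ∈ K, ⟪z, k⟫ ≤ 0 := by
    intro k hk
    have := hy (y + k) (haddK y hyK k hk)
    simpa using this
  have hzy : ⟪z, y⟫ = 0 := by
    have h1 : ⟪z, y⟫ ≤ 0 := by
      have := hy ((2 : ℝ) • y) (hcone 2 (by norm_num) y hyK)
      have h2 : ((2:ℝ) • y - y) = y := by
        rw [two_smul]; abel
      rw [h2] at this
      exact this
    have h2 : 0 ≤ ⟪z, y⟫ := by
      have := hy 0 h0K
      simp only [zero_sub, inner_neg_right] at this
      linarith
    linarith
  have hnegzK : -z ∈ K := by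
    apply hsuper
    intro k hk
    rw [inner_neg_left]
    linarith [hzK k hk]
  -- quadratic form expansion
  have hquad : ⟪L x, x⟫ = ⟪L y, y⟫ + ⟪L z, z⟫ + 2 * ⟪L y, z⟫ := by
    rw [hxyz, map_add, inner_add_left, inner_add_right, inner_add_right]
    have : ⟪L z, y⟫ = ⟪L y, z⟫ := by
      rw [hSym z y, real_inner_comm]
    rw [this]; ring
  have hfy : 0 ≤ ⟪L y, y⟫ := hcopos y hyK
  have hfz : 0 ≤ ⟪L z, z⟫ := by
    have := hcopos (-z) hnegzK
    simpa using this
  have hcross : 0 ≤ ⟪L y, z⟫ := by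
    rcases eq_or_ne y 0 with hy0 | hy0
    · simp [hy0]
    rcases eq_or_ne z 0 with hz0 | hz0
    · simp [hz0]
    -- normalize
    set u : EuclideanSpace ℝ (Fin n) := ‖y‖⁻¹ • y with hu
    set v : EuclideanSpace ℝ (Fin n) := ‖z‖⁻¹ • (-z) with hv
    have hny : (0:ℝ) < ‖y‖ := norm_pos_iff.mpr hy0
    have hnz : (0:ℝ) < ‖z‖ := norm_pos_iff.mpr hz0
    have huK : u ∈ K := hcone _ (inv_nonneg.mpr hny.le) y hyK
    have hvK : v ∈ K := hcone _ (inv_nonneg.mpr hnz.le) _ hnegzK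
    have hnu : ‖u‖ = 1 := by
      rw [hu, norm_smul]
      simp [abs_of_pos (inv_pos.mpr hny), inv_mul_cancel₀ hny.ne']
    have hnv : ‖v‖ = 1 := by
      rw [hv, norm_smul]
      simp [abs_of_pos (inv_pos.mpr hnz), inv_mul_cancel₀ hnz.ne']
    have huv : ⟪u, v⟫ = 0 := by
      rw [hu, hv, real_inner_smul_left, real_inner_smul_right, inner_neg_right,
        real_inner_comm, hzy]
      ring
    -- apply condition M with p = (u - v)/√2, q = (u + v)/√2
    set c : ℝ := (Real.sqrt 2)⁻¹ with hc
    have hc2 : c * c = 1/2 := by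
      rw [hc, ← mul_inv]
      rw [← Real.sqrt_mul_self (by norm_num : (0:ℝ) ≤ 2)]
      norm_num
    have hcpos : 0 < c := by positivity
    set p : EuclideanSpace ℝ (Fin n) := c • (u - v) with hp
    set q : EuclideanSpace ℝ (Fin n) := c • (u + v) with hq
    have hqK : q ∈ K := by
      rw [hq, smul_add]
      exact haddK _ (hcone c hcpos.le u huK) _ (hcone c hcpos.le v hvK)
    have hnormp : ‖p‖ = 1 := by
      have : ‖u - v‖ ^ 2 = 2 := by
        rw [norm_sub_sq_real, hnu, hnv, huv]; norm_num
      have h2 : ‖u - v‖ = Real.sqrt 2 := by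
        rw [← Real.sqrt_sq (norm_nonneg _), this]
      rw [hp, norm_smul, h2, Real.norm_eq_abs, abs_of_pos hcpos, hc,
        inv_mul_cancel₀ (by positivity : Real.sqrt 2 ≠ 0)]
    have hnormq : ‖q‖ = 1 := by
      have : ‖u + v‖ ^ 2 = 2 := by
        rw [norm_add_sq_real, hnu, hnv, huv]; norm_num
      have h2 : ‖u + v‖ = Real.sqrt 2 := by
        rw [← Real.sqrt_sq (norm_nonneg _), this]
      rw [hq, norm_smul, h2, Real.norm_eq_abs, abs_of_pos hcpos, hc,
        inv_mul_cancel₀ (by positivity : Real.sqrt 2 ≠ 0)]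
    have hvu : ⟪v, u⟫ = 0 := by rw [real_inner_comm]; exact huv
    have hpq : ⟪p, q⟫ = 0 := by
      rw [hp, hq, real_inner_smul_left, real_inner_smul_right, inner_sub_left,
        inner_add_right, inner_add_right, huv, hvu,
        real_inner_self_eq_norm_mul_norm, real_inner_self_eq_norm_mul_norm, hnu, hnv]
      ring
    have hMpq := hM p q hnormp hqK hnormq hpq
    have hfp : ⟪L p, p⟫ = (1/2) * (⟪L u, u⟫ + ⟪L v, v⟫ - 2 * ⟪L u, v⟫) := by
      rw [hp, _root_.map_smul, real_inner_smul_left, real_inner_smul_right, map_sub,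
        inner_sub_left, inner_sub_right, inner_sub_right]
      have : ⟪L v, u⟫ = ⟪L u, v⟫ := by rw [hSym v u, real_inner_comm]
      rw [this]
      rw [← mul_assoc, hc2]; ring
    have hfq : ⟪L q, q⟫ = (1/2) * (⟪L u, u⟫ + ⟪L v, v⟫ + 2 * ⟪L u, v⟫) := by
      rw [hq, _root_.map_smul, real_inner_smul_left, real_inner_smul_right, map_add,
        inner_add_left, inner_add_right, inner_add_right]
      have : ⟪L v, u⟫ = ⟪L u, v⟫ := by rw [hSym v u, real_inner_comm]
      rw [this]
      rw [← mul_assoc, hc2]; ring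
    have huvA : ⟪L u, v⟫ ≤ 0 := by
      rw [hfp, hfq] at hMpq
      linarith
    have hexp : ⟪L u, v⟫ = -(‖y‖ * ‖z‖)⁻¹ * ⟪L y, z⟫ := by
      rw [hu, hv, _root_.map_smul, real_inner_smul_left, real_inner_smul_right,
        inner_neg_right, mul_inv]
      ring
    rw [hexp] at huvA
    have hpos : (0:ℝ) < (‖y‖ * ‖z‖)⁻¹ := by positivity
    nlinarith
  rw [hquad]
  linarith
end

section
/- Let K ⊆ ℝ^n be a subdual proper cone and let A ∈ ℝ^{n×n} be symmetric. If A is K*-copositive (⟨Ax,x⟩ ≥ 0 for all x ∈ K*) and A satisfies condition (M) for K, then A is positive semidefinite, i.e., ⟨Ax,x⟩ ≥ 0 for all x ∈ ℝ^n. -/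
open Matrix RealInnerProductSpace

/-- For a subdual proper cone `K` (`K ⊆ K*`) and symmetric `A`: if `A` is
K*-copositive and satisfies condition (M) for `K`, then `A` is positive
semidefinite. -/
theorem quadratic_spherical_stmt10 (n : ℕ) (hn : 1 ≤ n)
    (K : Set (EuclideanSpace ℝ (Fin n))) (hK : IsProperCone K)
    (hsub : K ⊆ dualCone K)
    (A : Matrix (Fin n) (Fin n) ℝ) (hA : A.IsSymm)
    (hcopos : ∀ x ∈ dualCone K, 0 ≤ ⟪Matrix.toEuclideanLin A x, x⟫)
    (hM : CondM A K) :
    ∀ x : EuclideanSpace ℝ (Fin n), 0 ≤ ⟪Matrix.toEuclideanLin A x, x⟫ := by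
  obtain ⟨hKclosed, hKconv, hKcone, hKpointed, hKint⟩ := hK
  -- obtain a nonzero element of K
  obtain ⟨x₀, hx₀⟩ := hKint
  have hx₀K : x₀ ∈ K := interior_subset hx₀
  obtain ⟨ε, hε, hball⟩ := Metric.isOpen_iff.mp isOpen_interior x₀ hx₀
  have hy₀ : ∃ y₀ ∈ K, y₀ ≠ 0 := by
    set e : EuclideanSpace ℝ (Fin n) := EuclideanSpace.single ⟨0, hn⟩ (1 : ℝ) with he
    have hne : ‖e‖ = 1 := by simp [he]
    have h1 : x₀ + (ε/2) • e ∈ K := by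
      refine interior_subset (hball ?_)
      simp only [Metric.mem_ball, dist_eq_norm]
      have : x₀ + (ε/2) • e - x₀ = (ε/2) • e := by abel
      rw [this, norm_smul, hne, mul_one, Real.norm_eq_abs, abs_of_pos (by linarith : (0:ℝ) < ε/2)]
      linarith
    have h2 : x₀ - (ε/2) • e ∈ K := by
      refine interior_subset (hball ?_)
      simp only [Metric.mem_ball, dist_eq_norm]
      have : x₀ - (ε/2) • e - x₀ = -((ε/2) • e) := by abel
      rw [this, norm_neg, norm_smul, hne, mul_one, Real.norm_eq_abs, abs_of_pos (by linarith : (0:ℝ) < ε/2)]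
      linarith
    by_cases hz : x₀ + (ε/2) • e = 0
    · refine ⟨x₀ - (ε/2) • e, h2, ?_⟩
      intro hz2
      have h6 : (ε : ℝ) • e = 0 := by
        linear_combination (norm := module) hz - hz2
      have hene : e ≠ 0 := by
        intro h; rw [h] at hne; simp at hne
      rcases smul_eq_zero.mp h6 with h | h
      · linarith
      · exact hene h
    · exact ⟨x₀ + (ε/2) • e, h1, hz⟩
  obtain ⟨y₀, hy₀K, hy₀ne⟩ := hy₀
  -- main claim for unit vectors
  have key : ∀ v : EuclideanSpace ℝ (Fin n), ‖v‖ = 1 →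
      0 ≤ ⟪Matrix.toEuclideanLin A v, v⟫ := by
    intro v hv
    by_contra hneg
    push_neg at hneg
    by_cases hcase : ∃ y ∈ K, y ≠ 0 ∧ ⟪v, y⟫ = 0
    · obtain ⟨y, hyK, hyne, hvy⟩ := hcase
      have hny : (0:ℝ) < ‖y‖ := norm_pos_iff.mpr hyne
      set w : EuclideanSpace ℝ (Fin n) := ‖y‖⁻¹ • y with hw
      have hwK : w ∈ K := hKcone _ (by positivity) y hyK
      have hw1 : ‖w‖ = 1 := by
        rw [hw, norm_smul, norm_inv, norm_norm, inv_mul_cancel₀ (ne_of_gt hny)]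
      have h1 : 0 ≤ ⟪Matrix.toEuclideanLin A w, w⟫ := hcopos w (hsub hwK)
      have h2 : ⟪Matrix.toEuclideanLin A w, w⟫ ≤ ⟪Matrix.toEuclideanLin A v, v⟫ := by
        refine hM v w hv hwK hw1 ?_
        rw [hw, real_inner_smul_right, hvy, mul_zero]
      linarith
    · push_neg at hcase
      -- no two elements of K give opposite signs
      have htwo : ∀ y₁ ∈ K, ∀ y₂ ∈ K, 0 < ⟪v, y₁⟫ → ⟪v, y₂⟫ < 0 → False := by
        intro y₁ h₁ y₂ h₂ ha hb
        set a : ℝ := ⟪v, y₁⟫ with haa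
        set b : ℝ := ⟪v, y₂⟫ with hbb
        have hab : (0:ℝ) < a - b := by linarith
        set t : ℝ := a / (a - b) with ht
        have ht0 : 0 < t := by positivity
        have ht1 : t < 1 := by rw [ht, div_lt_one hab]; linarith
        set z : EuclideanSpace ℝ (Fin n) := (1 - t) • y₁ + t • y₂ with hz
        have hzK : z ∈ K := hKconv h₁ h₂ (by linarith) (le_of_lt ht0) (by ring)
        have hvz : ⟪v, z⟫ = 0 := by
          rw [hz, inner_add_right, real_inner_smul_right, real_inner_smul_right,
            ← haa, ← hbb, ht]
          field_simp
          ring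
        have hzne : z ≠ 0 := by
          intro hz0
          have hmem1 : (1 - t) • y₁ ∈ K := hKcone _ (by linarith) y₁ h₁
          have hadd : (1 - t) • y₁ + t • y₂ = 0 := by rw [← hz]; exact hz0
          have h7 : (1 - t) • y₁ = -(t • y₂) := eq_neg_of_add_eq_zero_left hadd
          have hmem2 : (1 - t) • y₁ ∈ -K := by
            rw [Set.mem_neg, h7, neg_neg]
            exact hKcone _ (le_of_lt ht0) y₂ h₂
          have : (1 - t) • y₁ ∈ K ∩ (-K) := ⟨hmem1, hmem2⟩
          rw [hKpointed, Set.mem_singleton_iff] at this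
          rcases smul_eq_zero.mp this with h | h
          · linarith [h]
          · rw [h] at haa; simp at haa; linarith
        exact hcase z hzK hzne hvz
      have hv0 : ⟪v, y₀⟫ ≠ 0 := hcase y₀ hy₀K hy₀ne
      rcases hv0.lt_or_gt with hlt | hgt
      · -- all inner products ≤ 0, so -v ∈ dualCone K
        have hmem : -v ∈ dualCone K := by
          intro y hy
          rw [inner_neg_left, le_neg, neg_zero]
          by_contra hpos
          push_neg at hpos
          exact htwo y hy y₀ hy₀K hpos hlt
        have := hcopos _ hmem
        rw [map_neg, inner_neg_neg] at this
        linarith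
      · -- all inner products ≥ 0, so v ∈ dualCone K
        have hmem : v ∈ dualCone K := by
          intro y hy
          by_contra hpos
          push_neg at hpos
          exact htwo y₀ hy₀K y hy hgt hpos
        have := hcopos _ hmem
        linarith
  -- conclude for arbitrary x
  intro x
  by_cases hx : x = 0
  · simp [hx]
  · have hnx : (0:ℝ) < ‖x‖ := norm_pos_iff.mpr hx
    have h1 : ‖(‖x‖⁻¹ : ℝ) • x‖ = 1 := by
      rw [norm_smul, norm_inv, norm_norm, inv_mul_cancel₀ (ne_of_gt hnx)]
    have h2 := key _ h1
    rw [LinearMap.map_smul, real_inner_smul_left, real_inner_smul_right] at h2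
    have h3 : (0:ℝ) < ‖x‖⁻¹ * ‖x‖⁻¹ := by positivity
    nlinarith [h2, h3]
end
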